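/- arXiv:1705.08191 — 2 statements merged into one kernel-verified Lean document; each statement's English description precedes it below -/
import Mathlib

section
/- Let p be a prime, a, b ≥ 1 and n ≥ 1. Let g ∈ Mat_{a+b}(ℚ_p) have block form (A, B; C, D) with A of size a×a, D of size b×b, such that every entry of A − 1_a, D − 1_b, B and C lies in p^n·ℤ_p. Then g is invertible and there exist unique matrices C', A', D', B' with all entries of A' − 1_a, D' − 1_b, B', C' in p^n·ℤ_p such that g = L·M·U, where L = (1_a, 0; C', 1_b), M = (A', 0; 0, D') and U = (1_a, B'; 0, 1_b). Moreover, there also exist unique matrices B'', A'', D'', C'' with the same congruence conditions such that g = (1_a, B''; 0, 1_b)·(A'', 0; 0, D'')·(1_a, 0; C'', 1_b). -/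
/-!
If `g - 1` has entries in `p^n ℤ_p` with `n ≥ 1`, then `g`, `A` and `D` are integral matrices
reducing to `1` modulo `p`, so their determinants are units of `ℤ_p` and their inverses are
integral. The Schur complement factorization
`g = (1, 0; C A⁻¹, 1) (A, 0; 0, D - C A⁻¹ B) (1, A⁻¹ B; 0, 1)` therefore has all its factors
in the congruence subgroup by the ultrametric inequality, and multiplying out any factorization of
this shape recovers its factors from `A, B, C, D`. Conjugating by the block swap turns `U·M·L`
factorizations of `(A, B; C, D)` into `L·M·U` factorizations of `(D, C; B, A)`.
-/

open Matrix

namespace Matrix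

variable {l m n o R : Type*}

def EntryNormLE [Norm R] (ε : ℝ) (X : Matrix m n R) : Prop :=
  ∀ i j, ‖X i j‖ ≤ ε

theorem EntryNormLE.mono [Norm R] {ε δ : ℝ} {X : Matrix m n R} (hX : X.EntryNormLE ε)
    (h : ε ≤ δ) : X.EntryNormLE δ :=
  fun i j => (hX i j).trans h

theorem EntryNormLE.fromBlocks [Norm R] {ε : ℝ} {A : Matrix n l R} {B : Matrix n m R}
    {C : Matrix o l R} {D : Matrix o m R} (hA : A.EntryNormLE ε) (hB : B.EntryNormLE ε)
    (hC : C.EntryNormLE ε) (hD : D.EntryNormLE ε) : (fromBlocks A B C D).EntryNormLE ε := by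
  rintro (i | i) (j | j)
  exacts [hA i j, hB i j, hC i j, hD i j]

theorem entryNormLE_one [DecidableEq n] [NormedRing R] [NormOneClass R] :
    (1 : Matrix n n R).EntryNormLE 1 :=
  fun i j => by rw [one_apply]; split_ifs <;> simp

theorem fromBlocks_sub [Sub R] (A A' : Matrix n l R) (B B' : Matrix n m R) (C C' : Matrix o l R)
    (D D' : Matrix o m R) :
    fromBlocks A B C D - fromBlocks A' B' C' D' =
      fromBlocks (A - A') (B - B') (C - C') (D - D') := by
  ext (_ | _) (_ | _) <;> rfl

section Ultrametric

variable [NormedRing R] [IsUltrametricDist R]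

theorem EntryNormLE.add {ε : ℝ} {X Y : Matrix m n R} (hX : X.EntryNormLE ε)
    (hY : Y.EntryNormLE ε) : (X + Y).EntryNormLE ε := fun i j =>
  (IsUltrametricDist.norm_add_le_max _ _).trans (max_le (hX i j) (hY i j))

theorem EntryNormLE.sub {ε : ℝ} {X Y : Matrix m n R} (hX : X.EntryNormLE ε)
    (hY : Y.EntryNormLE ε) : (X - Y).EntryNormLE ε := by
  rw [sub_eq_add_neg]
  exact hX.add fun i j => (norm_neg _).trans_le (hY i j)

theorem EntryNormLE.mul [Fintype n] {s t : ℝ} {X : Matrix m n R} {Y : Matrix n o R}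
    (hX : X.EntryNormLE s) (hY : Y.EntryNormLE t) (hs : 0 ≤ s) (ht : 0 ≤ t) :
    (X * Y).EntryNormLE (s * t) := fun i j =>
  IsUltrametricDist.norm_sum_le_of_forall_le_of_nonneg (mul_nonneg hs ht) fun k _ =>
    (norm_mul_le _ _).trans (mul_le_mul (hX i k) (hY k j) (norm_nonneg _) hs)

end Ultrametric

theorem isUnit_det_of_forall_sub_one_mem_maximalIdeal [Fintype n] [DecidableEq n] [CommRing R]
    [IsLocalRing R] {M : Matrix n n R} (h : ∀ i j, (M - 1) i j ∈ IsLocalRing.maximalIdeal R) :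
    IsUnit M.det := by
  have hres : M.map (IsLocalRing.residue R) = 1 := by
    ext i j
    have := (IsLocalRing.residue_eq_zero_iff _).2 (h i j)
    rw [sub_apply, map_sub, sub_eq_zero] at this
    rw [map_apply, this, one_apply, one_apply]
    split_ifs <;> simp
  refine IsUnit.of_map (IsLocalRing.residue R) _ ?_
  rw [RingHom.map_det, RingHom.mapMatrix_apply, hres, det_one]
  exact isUnit_one

section BlockFactorization

variable [Fintype l] [Fintype m] [DecidableEq l] [DecidableEq m] [CommRing R]
  {A : Matrix l l R} {B : Matrix l m R} {C : Matrix m l R} {D : Matrix m m R}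

theorem fromBlocks_eq_lowerDiagUpper_iff (hA : IsUnit A.det) {C' : Matrix m l R}
    {A' : Matrix l l R} {D' : Matrix m m R} {B' : Matrix l m R} :
    fromBlocks A B C D = fromBlocks 1 0 C' 1 * fromBlocks A' 0 0 D' * fromBlocks 1 B' 0 1 ↔
      C' = C * A⁻¹ ∧ A' = A ∧ D' = D - C * A⁻¹ * B ∧ B' = A⁻¹ * B := by
  simp only [fromBlocks_multiply, Matrix.one_mul, Matrix.mul_one, Matrix.zero_mul,
    Matrix.mul_zero, add_zero, zero_add, fromBlocks_inj]
  constructor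
  · rintro ⟨rfl, rfl, rfl, rfl⟩
    simp [mul_nonsing_inv_cancel_right _ _ hA, nonsing_inv_mul_cancel_left _ _ hA, Matrix.mul_assoc]
  · rintro ⟨rfl, rfl, rfl, rfl⟩
    simp [mul_nonsing_inv_cancel_left _ _ hA, nonsing_inv_mul_cancel_right _ _ hA, Matrix.mul_assoc]

theorem fromBlocks_eq_upperDiagLower_iff (hD : IsUnit D.det) {B' : Matrix l m R}
    {A' : Matrix l l R} {D' : Matrix m m R} {C' : Matrix m l R} :
    fromBlocks A B C D = fromBlocks 1 B' 0 1 * fromBlocks A' 0 0 D' * fromBlocks 1 0 C' 1 ↔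
      B' = B * D⁻¹ ∧ A' = A - B * D⁻¹ * C ∧ D' = D ∧ C' = D⁻¹ * C := by
  have swap : (fromBlocks 1 B' 0 1 * fromBlocks A' 0 0 D' * fromBlocks 1 0 C' 1).submatrix
      Sum.swap Sum.swap = fromBlocks 1 0 B' 1 * fromBlocks D' 0 0 A' * fromBlocks 1 C' 0 1 := by
    simp only [fromBlocks_multiply, Matrix.one_mul, Matrix.mul_one, Matrix.zero_mul,
      Matrix.mul_zero, add_zero, fromBlocks_submatrix_sum_swap_sum_swap, Matrix.mul_assoc, add_comm]
  have swap_inj : ∀ X Y : Matrix (l ⊕ m) (l ⊕ m) R,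
      X.submatrix Sum.swap Sum.swap = Y.submatrix Sum.swap Sum.swap ↔ X = Y :=
    fun _ _ => (reindex (Equiv.sumComm l m) (Equiv.sumComm l m)).injective.eq_iff
  rw [← swap_inj, fromBlocks_submatrix_sum_swap_sum_swap, swap,
    fromBlocks_eq_lowerDiagUpper_iff hD]
  exact and_congr_right' and_left_comm

end BlockFactorization

section PAdic

variable {p : ℕ} [Fact p.Prime]

theorem isUnit_det_and_entryNormLE_one_inv_of_sub_one [Fintype n] [DecidableEq n]
    {ε : ℝ} (hε : ε < 1) {M : Matrix n n ℚ_[p]} (h : (M - 1).EntryNormLE ε) :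
    IsUnit M.det ∧ M⁻¹.EntryNormLE 1 := by
  have hM : M.EntryNormLE 1 := by
    simpa using (h.mono hε.le).add entryNormLE_one
  let f : ℤ_[p] →+* ℚ_[p] := PadicInt.Coe.ringHom
  let M₀ : Matrix n n ℤ_[p] := fun i j => ⟨M i j, hM i j⟩
  have hM₀ : M₀.map f = M := rfl
  have hdet : IsUnit M₀.det := isUnit_det_of_forall_sub_one_mem_maximalIdeal fun i j => by
    rw [IsLocalRing.mem_maximalIdeal, PadicInt.mem_nonunits, PadicInt.norm_def]
    have : ((M₀ - 1) i j : ℚ_[p]) = (M - 1) i j := by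
      rw [← hM₀, ← RingHom.mapMatrix_apply, ← map_one f.mapMatrix, ← map_sub]; rfl
    exact this ▸ (h i j).trans_lt hε
  have hinv : M⁻¹ = M₀⁻¹.map f := inv_eq_left_inv <| by
    rw [← hM₀, ← RingHom.mapMatrix_apply, ← RingHom.mapMatrix_apply, ← map_mul,
      nonsing_inv_mul _ hdet, map_one]
  refine ⟨?_, fun i j => hinv ▸ PadicInt.norm_le_one _⟩
  rw [← hM₀, ← RingHom.mapMatrix_apply, ← RingHom.map_det]
  exact hdet.map f

variable [Fintype l] [DecidableEq l] [DecidableEq m] {ε : ℝ}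
  {A : Matrix l l ℚ_[p]} {B : Matrix l m ℚ_[p]} {C : Matrix m l ℚ_[p]}
  {D : Matrix m m ℚ_[p]}

theorem entryNormLE_lowerDiagUpper_factors (hε0 : 0 ≤ ε) (hε1 : ε < 1)
    (hA : (A - 1).EntryNormLE ε) (hB : B.EntryNormLE ε) (hC : C.EntryNormLE ε)
    (hD : (D - 1).EntryNormLE ε) :
    (C * A⁻¹).EntryNormLE ε ∧ (D - C * A⁻¹ * B - 1).EntryNormLE ε ∧
      (A⁻¹ * B).EntryNormLE ε := by
  have hA' := (isUnit_det_and_entryNormLE_one_inv_of_sub_one hε1 hA).2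
  have hCA : (C * A⁻¹).EntryNormLE ε := by simpa using hC.mul hA' hε0 zero_le_one
  have hAB : (A⁻¹ * B).EntryNormLE ε := by simpa using hA'.mul hB zero_le_one hε0
  refine ⟨hCA, ?_, hAB⟩
  rw [sub_right_comm]
  exact hD.sub ((hCA.mul hB hε0 hε0).mono (mul_le_of_le_one_left hε0 hε1.le))

theorem existsUnique_lowerDiagUpper [Fintype m] (hε0 : 0 ≤ ε) (hε1 : ε < 1)
    (hA : (A - 1).EntryNormLE ε) (hB : B.EntryNormLE ε) (hC : C.EntryNormLE ε)
    (hD : (D - 1).EntryNormLE ε) :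
    ∃! q : Matrix m l ℚ_[p] × Matrix l l ℚ_[p] × Matrix m m ℚ_[p] × Matrix l m ℚ_[p],
      q.1.EntryNormLE ε ∧ (q.2.1 - 1).EntryNormLE ε ∧ (q.2.2.1 - 1).EntryNormLE ε ∧
      q.2.2.2.EntryNormLE ε ∧
      fromBlocks A B C D =
        fromBlocks 1 0 q.1 1 * fromBlocks q.2.1 0 0 q.2.2.1 * fromBlocks 1 q.2.2.2 0 1 := by
  have hAu := (isUnit_det_and_entryNormLE_one_inv_of_sub_one hε1 hA).1
  obtain ⟨hCA, hS, hAB⟩ := entryNormLE_lowerDiagUpper_factors hε0 hε1 hA hB hC hD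
  refine ⟨(C * A⁻¹, A, D - C * A⁻¹ * B, A⁻¹ * B),
    ⟨hCA, hA, hS, hAB, (fromBlocks_eq_lowerDiagUpper_iff hAu).2 ⟨rfl, rfl, rfl, rfl⟩⟩, ?_⟩
  rintro q ⟨-, -, -, -, h⟩
  obtain ⟨h₁, h₂, h₃, h₄⟩ := (fromBlocks_eq_lowerDiagUpper_iff hAu).1 h
  exact Prod.ext h₁ (Prod.ext h₂ (Prod.ext h₃ h₄))

theorem existsUnique_upperDiagLower [Fintype m] (hε0 : 0 ≤ ε) (hε1 : ε < 1)
    (hA : (A - 1).EntryNormLE ε) (hB : B.EntryNormLE ε) (hC : C.EntryNormLE ε)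
    (hD : (D - 1).EntryNormLE ε) :
    ∃! q : Matrix l m ℚ_[p] × Matrix l l ℚ_[p] × Matrix m m ℚ_[p] × Matrix m l ℚ_[p],
      q.1.EntryNormLE ε ∧ (q.2.1 - 1).EntryNormLE ε ∧ (q.2.2.1 - 1).EntryNormLE ε ∧
      q.2.2.2.EntryNormLE ε ∧
      fromBlocks A B C D =
        fromBlocks 1 q.1 0 1 * fromBlocks q.2.1 0 0 q.2.2.1 * fromBlocks 1 0 q.2.2.2 1 := by
  have hDu := (isUnit_det_and_entryNormLE_one_inv_of_sub_one hε1 hD).1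
  obtain ⟨hBD, hS, hDC⟩ := entryNormLE_lowerDiagUpper_factors hε0 hε1 hD hC hB hA
  refine ⟨(B * D⁻¹, A - B * D⁻¹ * C, D, D⁻¹ * C),
    ⟨hBD, hS, hD, hDC, (fromBlocks_eq_upperDiagLower_iff hDu).2 ⟨rfl, rfl, rfl, rfl⟩⟩, ?_⟩
  rintro q ⟨-, -, -, -, h⟩
  obtain ⟨h₁, h₂, h₃, h₄⟩ := (fromBlocks_eq_upperDiagLower_iff hDu).1 h
  exact Prod.ext h₁ (Prod.ext h₂ (Prod.ext h₃ h₄))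

end PAdic

end Matrix

theorem stmt_6_general (p : ℕ) [Fact p.Prime] (a b n : ℕ) (hn : 1 ≤ n)
    (A : Matrix (Fin a) (Fin a) ℚ_[p]) (B : Matrix (Fin a) (Fin b) ℚ_[p])
    (C : Matrix (Fin b) (Fin a) ℚ_[p]) (D : Matrix (Fin b) (Fin b) ℚ_[p])
    (hA : ∀ i j, ‖(A - 1) i j‖ ≤ (p : ℝ) ^ (-(n : ℤ)))
    (hB : ∀ i j, ‖B i j‖ ≤ (p : ℝ) ^ (-(n : ℤ)))
    (hC : ∀ i j, ‖C i j‖ ≤ (p : ℝ) ^ (-(n : ℤ)))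
    (hD : ∀ i j, ‖(D - 1) i j‖ ≤ (p : ℝ) ^ (-(n : ℤ))) :
    IsUnit (fromBlocks A B C D).det ∧
    (∃! q : Matrix (Fin b) (Fin a) ℚ_[p] × Matrix (Fin a) (Fin a) ℚ_[p] ×
        Matrix (Fin b) (Fin b) ℚ_[p] × Matrix (Fin a) (Fin b) ℚ_[p],
      (∀ i j, ‖q.1 i j‖ ≤ (p : ℝ) ^ (-(n : ℤ))) ∧
      (∀ i j, ‖(q.2.1 - 1) i j‖ ≤ (p : ℝ) ^ (-(n : ℤ))) ∧
      (∀ i j, ‖(q.2.2.1 - 1) i j‖ ≤ (p : ℝ) ^ (-(n : ℤ))) ∧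
      (∀ i j, ‖q.2.2.2 i j‖ ≤ (p : ℝ) ^ (-(n : ℤ))) ∧
      fromBlocks A B C D =
        fromBlocks 1 0 q.1 1 * fromBlocks q.2.1 0 0 q.2.2.1 * fromBlocks 1 q.2.2.2 0 1) ∧
    (∃! q : Matrix (Fin a) (Fin b) ℚ_[p] × Matrix (Fin a) (Fin a) ℚ_[p] ×
        Matrix (Fin b) (Fin b) ℚ_[p] × Matrix (Fin b) (Fin a) ℚ_[p],
      (∀ i j, ‖q.1 i j‖ ≤ (p : ℝ) ^ (-(n : ℤ))) ∧
      (∀ i j, ‖(q.2.1 - 1) i j‖ ≤ (p : ℝ) ^ (-(n : ℤ))) ∧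
      (∀ i j, ‖(q.2.2.1 - 1) i j‖ ≤ (p : ℝ) ^ (-(n : ℤ))) ∧
      (∀ i j, ‖q.2.2.2 i j‖ ≤ (p : ℝ) ^ (-(n : ℤ))) ∧
      fromBlocks A B C D =
        fromBlocks 1 q.1 0 1 * fromBlocks q.2.1 0 0 q.2.2.1 * fromBlocks 1 0 q.2.2.2 1) := by
  set ε : ℝ := (p : ℝ) ^ (-(n : ℤ))
  have hε0 : 0 ≤ ε := by positivity
  have hε1 : ε < 1 :=
    zpow_lt_one_of_neg₀ (by exact_mod_cast (Fact.out : p.Prime).one_lt) (by omega)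
  have hg : (fromBlocks A B C D - 1).EntryNormLE ε := by
    rw [← fromBlocks_one, fromBlocks_sub, sub_zero, sub_zero]
    exact EntryNormLE.fromBlocks hA hB hC hD
  exact ⟨(isUnit_det_and_entryNormLE_one_inv_of_sub_one hε1 hg).1,
    existsUnique_lowerDiagUpper hε0 hε1 hA hB hC hD,
    existsUnique_upperDiagLower hε0 hε1 hA hB hC hD⟩

/-- Principal congruence subgroups of `GL_{a+b}(ℤ_p)` are totally decomposed
with respect to the block parabolic: unique `L·M·U` and `U·M·L` factorizations
with all factors in the same congruence subgroup. -/
theorem stmt_6 (p : ℕ) [Fact p.Prime] (a b n : ℕ) (ha : 1 ≤ a) (hb : 1 ≤ b) (hn : 1 ≤ n)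
    (A : Matrix (Fin a) (Fin a) ℚ_[p]) (B : Matrix (Fin a) (Fin b) ℚ_[p])
    (C : Matrix (Fin b) (Fin a) ℚ_[p]) (D : Matrix (Fin b) (Fin b) ℚ_[p])
    (hA : ∀ i j, ‖(A - 1) i j‖ ≤ (p : ℝ) ^ (-(n : ℤ)))
    (hB : ∀ i j, ‖B i j‖ ≤ (p : ℝ) ^ (-(n : ℤ)))
    (hC : ∀ i j, ‖C i j‖ ≤ (p : ℝ) ^ (-(n : ℤ)))
    (hD : ∀ i j, ‖(D - 1) i j‖ ≤ (p : ℝ) ^ (-(n : ℤ))) :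
    IsUnit (fromBlocks A B C D).det ∧
    (∃! q : Matrix (Fin b) (Fin a) ℚ_[p] × Matrix (Fin a) (Fin a) ℚ_[p] ×
        Matrix (Fin b) (Fin b) ℚ_[p] × Matrix (Fin a) (Fin b) ℚ_[p],
      (∀ i j, ‖q.1 i j‖ ≤ (p : ℝ) ^ (-(n : ℤ))) ∧
      (∀ i j, ‖(q.2.1 - 1) i j‖ ≤ (p : ℝ) ^ (-(n : ℤ))) ∧
      (∀ i j, ‖(q.2.2.1 - 1) i j‖ ≤ (p : ℝ) ^ (-(n : ℤ))) ∧
      (∀ i j, ‖q.2.2.2 i j‖ ≤ (p : ℝ) ^ (-(n : ℤ))) ∧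
      fromBlocks A B C D =
        fromBlocks 1 0 q.1 1 * fromBlocks q.2.1 0 0 q.2.2.1 * fromBlocks 1 q.2.2.2 0 1) ∧
    (∃! q : Matrix (Fin a) (Fin b) ℚ_[p] × Matrix (Fin a) (Fin a) ℚ_[p] ×
        Matrix (Fin b) (Fin b) ℚ_[p] × Matrix (Fin b) (Fin a) ℚ_[p],
      (∀ i j, ‖q.1 i j‖ ≤ (p : ℝ) ^ (-(n : ℤ))) ∧
      (∀ i j, ‖(q.2.1 - 1) i j‖ ≤ (p : ℝ) ^ (-(n : ℤ))) ∧
      (∀ i j, ‖(q.2.2.1 - 1) i j‖ ≤ (p : ℝ) ^ (-(n : ℤ))) ∧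
      (∀ i j, ‖q.2.2.2 i j‖ ≤ (p : ℝ) ^ (-(n : ℤ))) ∧
      fromBlocks A B C D =
        fromBlocks 1 q.1 0 1 * fromBlocks q.2.1 0 0 q.2.2.1 * fromBlocks 1 0 q.2.2.2 1) :=
  stmt_6_general p a b n hn A B C D hA hB hC hD
end

section
/- Let p be a prime and n ≥ 1. Let g ∈ GL_2(ℚ_p) be of the form g = t·(1, 0; c, 1), where t is an invertible upper triangular matrix and c ∈ ℚ_p with |c| > p^n. Then there exists x ∈ ℚ_p with |x| ≤ p^{-n} such that the (2,2) entry of g·(1, x; 0, 1) is zero; in particular, g·(1, x; 0, 1) does not lie in the big cell B·B̄ of GL_2(ℚ_p) (B the upper triangular and B̄ the lower triangular Borel subgroup), so g ∈ (G − B·B̄)·(U ∩ K_n). -/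
/-!
Right multiplication by `(1, x; 0, 1)` changes the `(2,2)` entry of `t·(1, 0; c, 1)` into
`t₂₂ (c x + 1)`, so `x = -c⁻¹` kills it; the hypothesis `|c| > p^n` is exactly what puts this
`x` in `p^n ℤ_p`.
-/

open Matrix

section Unipotent

variable {R : Type*} [CommRing R]

theorem det_upperUnipotent (x : R) : (!![1, x; 0, 1] : Matrix (Fin 2) (Fin 2) R).det = 1 := by
  simp [det_fin_two_of]

theorem det_lowerUnipotent (c : R) : (!![1, 0; c, 1] : Matrix (Fin 2) (Fin 2) R).det = 1 := by
  simp [det_fin_two_of]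

theorem upperUnipotent_neg_mul_self (x : R) :
    !![1, -x; 0, 1] * !![1, x; 0, 1] = (1 : Matrix (Fin 2) (Fin 2) R) := by
  ext i j
  fin_cases i <;> fin_cases j <;> simp

theorem mul_lowerUnipotent_mul_upperUnipotent_one_one {t : Matrix (Fin 2) (Fin 2) R}
    (ht : t 1 0 = 0) (c x : R) :
    (t * !![1, 0; c, 1] * !![1, x; 0, 1]) 1 1 = t 1 1 * (c * x + 1) := by
  simp only [Fin.isValue, mul_apply, of_apply, cons_val', cons_val_fin_one, Fin.sum_univ_two, ht,
    cons_val_zero, zero_mul, cons_val_one, zero_add, mul_one]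
  ring

end Unipotent

theorem norm_inv_le_inv_of_lt {K : Type*} [NormedDivisionRing K] {r : ℝ} {c : K}
    (hr : 0 < r) (hc : r < ‖c‖) : ‖c⁻¹‖ ≤ r⁻¹ := by
  rw [norm_inv]
  exact inv_anti₀ hr hc.le

theorem stmt_11_general (p : ℕ) [Fact p.Prime] (n : ℕ)
    (t : Matrix (Fin 2) (Fin 2) ℚ_[p]) (ht : IsUnit t.det) (htu : t 1 0 = 0)
    (c : ℚ_[p]) (hc : (p : ℝ) ^ (n : ℤ) < ‖c‖)
    (g : Matrix (Fin 2) (Fin 2) ℚ_[p]) (hg : g = t * !![1, 0; c, 1]) :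
    ∃ x : ℚ_[p], ‖x‖ ≤ (p : ℝ) ^ (-(n : ℤ)) ∧ (g * !![1, x; 0, 1]) 1 1 = 0 ∧
      ∃ (h : Matrix (Fin 2) (Fin 2) ℚ_[p]) (y : ℚ_[p]),
        IsUnit h.det ∧ h 1 1 = 0 ∧ ‖y‖ ≤ (p : ℝ) ^ (-(n : ℤ)) ∧
        g = h * !![1, y; 0, 1] := by
  subst hg
  have hpn : (0 : ℝ) < (p : ℝ) ^ (n : ℤ) :=
    zpow_pos (Nat.cast_pos.mpr (Fact.out : p.Prime).pos) _
  have hc0 : c ≠ 0 := norm_pos_iff.mp (hpn.trans hc)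
  have hx : ‖c⁻¹‖ ≤ (p : ℝ) ^ (-(n : ℤ)) := by
    rw [_root_.zpow_neg]
    exact norm_inv_le_inv_of_lt hpn hc
  have hkill : (t * !![1, 0; c, 1] * !![1, -c⁻¹; 0, 1]) 1 1 = 0 := by
    rw [mul_lowerUnipotent_mul_upperUnipotent_one_one htu, mul_neg, mul_inv_cancel₀ hc0,
      neg_add_cancel, mul_zero]
  refine ⟨-c⁻¹, by rwa [norm_neg], hkill, _, c⁻¹, ?_, hkill, hx, ?_⟩
  · simpa only [det_mul, det_lowerUnipotent, det_upperUnipotent, mul_one] using ht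
  · rw [Matrix.mul_assoc _ !![1, -c⁻¹; 0, 1], upperUnipotent_neg_mul_self, Matrix.mul_one]

/-- Rank-one instance of the geometric lemma: if `g = t·(1,0;c,1)` with `t`
upper triangular invertible and `|c| > p^n`, then multiplying `g` on the right
by a suitable element of `U ∩ K_n` kills the `(2,2)` entry, so
`g ∈ (G − B·B̄)·(U ∩ K_n)`. -/
theorem stmt_11 (p : ℕ) [Fact p.Prime] (n : ℕ) (hn : 1 ≤ n)
    (t : Matrix (Fin 2) (Fin 2) ℚ_[p]) (ht : IsUnit t.det) (htu : t 1 0 = 0)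
    (c : ℚ_[p]) (hc : (p : ℝ) ^ (n : ℤ) < ‖c‖)
    (g : Matrix (Fin 2) (Fin 2) ℚ_[p]) (hg : g = t * !![1, 0; c, 1]) :
    ∃ x : ℚ_[p], ‖x‖ ≤ (p : ℝ) ^ (-(n : ℤ)) ∧ (g * !![1, x; 0, 1]) 1 1 = 0 ∧
      ∃ (h : Matrix (Fin 2) (Fin 2) ℚ_[p]) (y : ℚ_[p]),
        IsUnit h.det ∧ h 1 1 = 0 ∧ ‖y‖ ≤ (p : ℝ) ^ (-(n : ℤ)) ∧
        g = h * !![1, y; 0, 1] :=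
  stmt_11_general p n t ht htu c hc g hg
end
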